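/- arXiv:2002.00112 — 2 statements merged into one kernel-verified Lean document; each statement's English description precedes it below -/
import Mathlib

section
/- Let $\phi$ be a smooth function on $[0,\infty)$ with $\phi^{(m)}(0) = 0$ for all $m \in \mathbb{N}$, and set $\phi_j(x) = \phi(2^{-j} x)$ for $j \in \mathbb{N}_0$. Let $\ell, N \in \mathbb{N}$ with $N > \ell$, and let $\lambda_k = 2k + n$ for $k \in \mathbb{N}_0$. Then there is a constant $C$ depending only on $N$ and $\ell$ such that $|\triangle_k^\ell(\phi_j(\sqrt{\lambda_k}))| \le C \|\phi^{(N)}\|_{L^\infty} 2^{-jN} \lambda_k^{N/2 - \ell}$ for all $j, k \in \mathbb{N}_0$. -/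
/-- Forward difference operator on sequences. -/
def fdiff (f : ℕ → ℝ) : ℕ → ℝ := fun k => f (k + 1) - f k

/-- Forward difference with step `2` on real functions. -/
def fdiffR (F : ℝ → ℝ) : ℝ → ℝ := fun x => F (x + 2) - F x

lemma fdiff_transfer (n : ℕ) : ∀ (ℓ : ℕ) (F : ℝ → ℝ) (k : ℕ),
    fdiff^[ℓ] (fun k : ℕ => F (2 * k + n)) k = fdiffR^[ℓ] F (2 * k + n) := by
  intro ℓ
  induction ℓ with
  | zero => intro F k; rfl
  | succ ℓ ih =>
    intro F k
    rw [Function.iterate_succ_apply, Function.iterate_succ_apply]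
    have h : fdiff (fun k : ℕ => F (2 * k + n)) = fun k : ℕ => (fdiffR F) (2 * k + n) := by
      funext k
      simp only [fdiff, fdiffR]
      have : (2 * ((k : ℕ) + 1 : ℕ) + n : ℝ) = (2 * k + n) + 2 := by push_cast; ring
      rw [this]
    rw [h, ih (fdiffR F) k]

/-- Iterated mean value theorem for iterated forward differences. -/
lemma fd_mvt : ∀ (ℓ : ℕ) (D : ℕ → ℝ → ℝ),
    (∀ i < ℓ, ∀ x : ℝ, 0 < x → HasDerivAt (D i) (D (i + 1) x) x) →
    ∀ x : ℝ, 0 < x → ∃ ξ ∈ Set.Icc x (x + 2 * ℓ),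
      fdiffR^[ℓ] (D 0) x = 2 ^ ℓ * D ℓ ξ := by
  intro ℓ
  induction ℓ with
  | zero => intro D _ x _; exact ⟨x, by simp, by simp⟩
  | succ ℓ ih =>
    intro D hD x hx
    set D' : ℕ → ℝ → ℝ := fun i y => D i (y + 2) - D i y with hD'def
    have hstep : ∀ i < ℓ, ∀ y : ℝ, 0 < y → HasDerivAt (D' i) (D' (i + 1) y) y := by
      intro i hi y hy
      have h1 : HasDerivAt (fun y => D i (y + 2)) (D (i + 1) (y + 2)) y :=
        HasDerivAt.comp_add_const y 2 (hD i (by omega) (y + 2) (by linarith))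
      exact h1.sub (hD i (by omega) y hy)
    obtain ⟨η, hη, hval⟩ := ih D' hstep x hx
    have hη0 : 0 < η := lt_of_lt_of_le hx hη.1
    obtain ⟨ξ, hξ, hDξ⟩ := exists_hasDerivAt_eq_slope (D ℓ) (D (ℓ + 1))
      (by linarith : η < η + 2)
      (fun y hy => ((hD ℓ (by omega) y (by rcases hy with ⟨h1, _⟩; linarith)).continuousAt).continuousWithinAt)
      (fun y hy => hD ℓ (by omega) y (by rcases hy with ⟨h1, _⟩; linarith))
    refine ⟨ξ, ⟨by rcases hξ with ⟨h1, _⟩; linarith [hη.1], by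
      rcases hξ with ⟨_, h2⟩
      have := hη.2
      push_cast
      push_cast at this
      linarith⟩, ?_⟩
    have hit : fdiffR^[ℓ + 1] (D 0) x = fdiffR^[ℓ] (D' 0) x := by
      rw [Function.iterate_succ_apply]; rfl
    rw [hit, hval, hDξ]
    have h2 : η + 2 - η = 2 := by ring
    rw [h2]
    ring

/-- Coefficients in the formula for the iterated derivative of `t ↦ φ (h √t)`. -/
noncomputable def coef : ℕ → ℕ → ℝ
  | 0, _ => 0
  | 1, a => if a = 1 then 1 / 2 else 0
  | (ℓ + 2), a => (1 / 2) * coef (ℓ + 1) (a - 1) + ((a : ℝ) / 2 - (ℓ + 1)) * coef (ℓ + 1) a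

lemma coef_zero_right : ∀ ℓ, coef ℓ 0 = 0
  | 0 => rfl
  | 1 => by simp [coef]
  | (ℓ + 2) => by simp [coef, coef_zero_right (ℓ + 1)]

lemma coef_eq_zero : ∀ ℓ a, ℓ < a → coef ℓ a = 0
  | 0, a, _ => rfl
  | 1, a, h => by simp only [coef]; rw [if_neg (by omega)]
  | (ℓ + 2), a, h => by
    simp only [coef]
    rw [coef_eq_zero (ℓ + 1) (a - 1) (by omega), coef_eq_zero (ℓ + 1) a (by omega)]
    ring

/-- A Taylor-type bound: if the derivatives of order `< M` of `ψ` vanish at `0` and the `M`-th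
derivative is bounded by `B` on `[0, ∞)`, then `|ψ u| ≤ B u ^ M`. -/
lemma taylor_aux (B : ℝ) : ∀ (M : ℕ) (ψ : ℝ → ℝ), ContDiffOn ℝ (⊤ : ℕ∞) ψ (Set.Ici 0) →
    (∀ i < M, iteratedDerivWithin i ψ (Set.Ici 0) 0 = 0) →
    (∀ x ∈ Set.Ici (0 : ℝ), |iteratedDerivWithin M ψ (Set.Ici 0) x| ≤ B) →
    ∀ u : ℝ, 0 ≤ u → |ψ u| ≤ B * u ^ M := by
  intro M
  induction M with
  | zero =>
    intro ψ _ _ hb u hu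
    simpa [iteratedDerivWithin_zero] using hb u hu
  | succ M ih =>
    intro ψ hψ hv hb u hu
    have hB0 : 0 ≤ B := le_trans (abs_nonneg _) (hb 0 Set.self_mem_Ici)
    set ψ' := derivWithin ψ (Set.Ici 0) with hψ'def
    have udo : UniqueDiffOn ℝ (Set.Ici (0:ℝ)) := uniqueDiffOn_Ici 0
    have hψ'smooth : ContDiffOn ℝ (⊤ : ℕ∞) ψ' (Set.Ici 0) :=
      hψ.derivWithin udo (by simp)
    have hv' : ∀ i < M, iteratedDerivWithin i ψ' (Set.Ici 0) 0 = 0 := by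
      intro i hi
      rw [← iteratedDerivWithin_succ']
      exact hv (i + 1) (by omega)
    have hb' : ∀ x ∈ Set.Ici (0 : ℝ), |iteratedDerivWithin M ψ' (Set.Ici 0) x| ≤ B := by
      intro x hx
      rw [← iteratedDerivWithin_succ']
      exact hb x hx
    have hIH : ∀ y : ℝ, 0 ≤ y → |ψ' y| ≤ B * y ^ M := ih ψ' hψ'smooth hv' hb'
    have hψ0 : ψ 0 = 0 := by
      have := hv 0 (by omega)
      rwa [iteratedDerivWithin_zero] at this
    have hdAt : ∀ x : ℝ, 0 < x → HasDerivAt ψ (ψ' x) x := by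
      intro x hx
      have hca : ContDiffAt ℝ (⊤ : ℕ∞) ψ x :=
        (hψ x (le_of_lt hx)).contDiffAt (Ici_mem_nhds hx)
      have hd : DifferentiableAt ℝ ψ x := hca.differentiableAt (by simp)
      have : HasDerivAt ψ (deriv ψ x) x := hd.hasDerivAt
      rwa [← derivWithin_of_mem_nhds (Ici_mem_nhds hx)] at this
    have key : ∀ (s : ℝ), s = 1 ∨ s = -1 → ∀ v : ℝ, 0 ≤ v → s * ψ v ≤ B * v ^ (M + 1) := by
      intro s hs v hv'
      set g : ℝ → ℝ := fun x => B * x ^ (M + 1) - s * ψ x with hgdef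
      have hg' : ∀ x : ℝ, 0 < x → HasDerivAt g (B * ((M + 1 : ℕ) * x ^ M) - s * ψ' x) x := by
        intro x hx
        have h1 : HasDerivAt (fun x : ℝ => x ^ (M + 1)) ((M + 1 : ℕ) * x ^ M) x := by
          simpa using hasDerivAt_pow (M + 1) x
        exact (h1.const_mul B).sub ((hdAt x hx).const_mul s)
      have hmono : MonotoneOn g (Set.Ici 0) := by
        apply monotoneOn_of_deriv_nonneg (convex_Ici 0)
        · exact ((continuous_const.mul (continuous_pow (M + 1))).continuousOn).sub
            (continuous_const.continuousOn.mul hψ.continuousOn)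
        · intro x hx
          rw [interior_Ici] at hx
          exact ((hg' x hx).differentiableAt).differentiableWithinAt
        · intro x hx
          rw [interior_Ici] at hx
          rw [(hg' x hx).deriv]
          have h2 := hIH x (le_of_lt hx)
          have h3 : s * ψ' x ≤ B * x ^ M := by
            rcases hs with h | h <;> rw [h] <;> cases abs_le.1 h2 <;> linarith
          have h4 : (0:ℝ) ≤ B * x ^ M := mul_nonneg hB0 (pow_nonneg hx.le M)
          have h5 : (1:ℝ) ≤ (M + 1 : ℕ) := by exact_mod_cast Nat.succ_le_succ (Nat.zero_le M)
          nlinarith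
      have := hmono Set.self_mem_Ici hv' hv'
      have hg0 : g 0 = 0 := by simp [hgdef, hψ0]
      rw [hg0] at this
      simpa [hgdef] using this
    have h1 := key 1 (Or.inl rfl) u hu
    have h2 := key (-1) (Or.inr rfl) u hu
    rw [abs_le]
    constructor <;> nlinarith

lemma iDW_congr_set {f : ℝ → ℝ} {s t : Set ℝ} {x : ℝ} (hst : s =ᶠ[nhds x] t) (b : ℕ) :
    iteratedDerivWithin b f s x = iteratedDerivWithin b f t x := by
  rw [iteratedDerivWithin_eq_iteratedFDerivWithin, iteratedDerivWithin_eq_iteratedFDerivWithin,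
    iteratedFDerivWithin_congr_set hst]

lemma Ici_eventuallyEq_Ioi {u : ℝ} (hu : 0 < u) : Set.Ici (0:ℝ) =ᶠ[nhds u] Set.Ioi (0:ℝ) := by
  rw [Filter.eventuallyEq_set]
  filter_upwards [Ioi_mem_nhds hu] with z hz
  simp only [Set.mem_Ici, Set.mem_Ioi]
  exact ⟨fun _ => hz, fun h => le_of_lt h⟩

lemma Phi_hasDerivAt {φ : ℝ → ℝ} (hφ : ContDiffOn ℝ (⊤ : ℕ∞) φ (Set.Ici 0)) (a : ℕ)
    {u : ℝ} (hu : 0 < u) :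
    HasDerivAt (iteratedDerivWithin a φ (Set.Ici 0))
      (iteratedDerivWithin (a + 1) φ (Set.Ici 0) u) u := by
  have hφo : ContDiffOn ℝ (⊤ : ℕ∞) φ (Set.Ioi 0) := hφ.mono Set.Ioi_subset_Ici_self
  have hEq : ∀ (b : ℕ) (y : ℝ), 0 < y →
      iteratedDerivWithin b φ (Set.Ici 0) y = iteratedDerivWithin b φ (Set.Ioi 0) y :=
    fun b y hy => iDW_congr_set (Ici_eventuallyEq_Ioi hy) b
  have hdo : HasDerivAt (iteratedDerivWithin a φ (Set.Ioi 0))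
      (iteratedDerivWithin (a + 1) φ (Set.Ioi 0) u) u := by
    have hdiff : DifferentiableOn ℝ (iteratedDerivWithin a φ (Set.Ioi 0)) (Set.Ioi 0) :=
      hφo.differentiableOn_iteratedDerivWithin (by exact_mod_cast WithTop.coe_lt_top _)
        isOpen_Ioi.uniqueDiffOn
    have hda : DifferentiableAt ℝ (iteratedDerivWithin a φ (Set.Ioi 0)) u :=
      (hdiff u hu).differentiableAt (Ioi_mem_nhds hu)
    have h1 : HasDerivAt (iteratedDerivWithin a φ (Set.Ioi 0))
        (deriv (iteratedDerivWithin a φ (Set.Ioi 0)) u) u := hda.hasDerivAt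
    rwa [iteratedDerivWithin_succ,
      derivWithin_of_isOpen isOpen_Ioi hu]
  have hfeq : iteratedDerivWithin a φ (Set.Ici 0) =ᶠ[nhds u]
      iteratedDerivWithin a φ (Set.Ioi 0) := by
    filter_upwards [Ioi_mem_nhds hu] with z hz
    exact hEq a z hz
  rw [hEq (a + 1) u hu]
  exact hdo.congr_of_eventuallyEq hfeq

lemma Phi_smooth {φ : ℝ → ℝ} (hφ : ContDiffOn ℝ (⊤ : ℕ∞) φ (Set.Ici 0)) (a : ℕ) :
    ContDiffOn ℝ (⊤ : ℕ∞) (iteratedDerivWithin a φ (Set.Ici 0)) (Set.Ici 0) := by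
  induction a generalizing φ with
  | zero => simpa [iteratedDerivWithin_zero] using hφ
  | succ a ih =>
    have h1 : ContDiffOn ℝ (⊤ : ℕ∞) (derivWithin φ (Set.Ici 0)) (Set.Ici 0) :=
      hφ.derivWithin (uniqueDiffOn_Ici 0) (by simp)
    have h2 := ih h1
    apply h2.congr
    intro x hx
    exact congrFun iteratedDerivWithin_succ' x

lemma Phi_comp {φ : ℝ → ℝ} : ∀ (i a : ℕ) (x : ℝ), x ∈ Set.Ici (0:ℝ) →
    iteratedDerivWithin i (iteratedDerivWithin a φ (Set.Ici 0)) (Set.Ici 0) x =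
      iteratedDerivWithin (a + i) φ (Set.Ici 0) x := by
  intro i
  induction i with
  | zero => intro a x _; simp
  | succ i ih =>
    intro a x hx
    rw [iteratedDerivWithin_succ']
    have hEq : Set.EqOn (derivWithin (iteratedDerivWithin a φ (Set.Ici 0)) (Set.Ici 0))
        (iteratedDerivWithin (a + 1) φ (Set.Ici 0)) (Set.Ici 0) := by
      intro y hy
      exact (congrFun iteratedDerivWithin_succ y).symm
    rw [iteratedDerivWithin_congr hEq hx, ih (a + 1) x hx]
    congr 1
    omega

/-- The explicit form of the `ℓ`-th derivative of `t ↦ φ (h √t)` for `ℓ ≥ 1`. -/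
noncomputable def Dfam (φ : ℝ → ℝ) (h : ℝ) (ℓ : ℕ) (t : ℝ) : ℝ :=
  ∑ i ∈ Finset.range ℓ, coef ℓ (i + 1) * h ^ (i + 1) *
    iteratedDerivWithin (i + 1) φ (Set.Ici 0) (h * Real.sqrt t) * t ^ (((i : ℝ) + 1) / 2 - ℓ)

lemma inv_two_sqrt (t : ℝ) (ht : 0 < t) (p : ℝ) :
    1 / (2 * Real.sqrt t) * t ^ p = (1 / 2) * t ^ (p - 1 / 2) := by
  have h1 : (0:ℝ) < t ^ ((1:ℝ) / 2) := Real.rpow_pos_of_pos ht _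
  have h2 : (0:ℝ) < t ^ p := Real.rpow_pos_of_pos ht _
  rw [Real.sqrt_eq_rpow, Real.rpow_sub ht]
  field_simp

section main

variable {φ : ℝ → ℝ} (hφ : ContDiffOn ℝ (⊤ : ℕ∞) φ (Set.Ici 0)) {h : ℝ} (hh : 0 < h)

include hφ hh

lemma sqrt_chain (a : ℕ) {t : ℝ} (ht : 0 < t) :
    HasDerivAt (fun t => iteratedDerivWithin a φ (Set.Ici 0) (h * Real.sqrt t))
      (iteratedDerivWithin (a + 1) φ (Set.Ici 0) (h * Real.sqrt t) *
        (h * (1 / (2 * Real.sqrt t)))) t := by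
  have hs : HasDerivAt (fun t => h * Real.sqrt t) (h * (1 / (2 * Real.sqrt t))) t :=
    (Real.hasDerivAt_sqrt ht.ne').const_mul h
  have hu : 0 < h * Real.sqrt t := mul_pos hh (Real.sqrt_pos.2 ht)
  exact (Phi_hasDerivAt hφ a hu).comp t hs

lemma Dfam_base {t : ℝ} (ht : 0 < t) :
    HasDerivAt (fun t => φ (h * Real.sqrt t)) (Dfam φ h 1 t) t := by
  have h0 : (fun t => φ (h * Real.sqrt t)) =
      (fun t => iteratedDerivWithin 0 φ (Set.Ici 0) (h * Real.sqrt t)) := by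
    simp [iteratedDerivWithin_zero]
  rw [h0]
  have := sqrt_chain hφ hh 0 ht
  convert this using 1
  show Dfam φ h 1 t = _
  rw [Dfam, Finset.sum_range_one]
  have hc : coef 1 1 = 1 / 2 := by simp [coef]
  rw [hc]
  have hinv : 1 / (2 * Real.sqrt t) = 1 / 2 * t ^ (-(1:ℝ)/2) := by
    have := inv_two_sqrt t ht 0
    rw [Real.rpow_zero, mul_one] at this
    rw [this]
    norm_num
  rw [show (((0:ℕ):ℝ) + 1) / 2 - ((1:ℕ):ℝ) = -1/2 from by norm_num, hinv]
  ring

lemma Dfam_step (m : ℕ) {t : ℝ} (ht : 0 < t) :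
    HasDerivAt (Dfam φ h (m + 1)) (Dfam φ h (m + 2) t) t := by
  have hcoef : ∀ i : ℕ, coef (m + 2) (i + 1)
      = 1 / 2 * coef (m + 1) i + (((i : ℝ) + 1) / 2 - ((m + 1 : ℕ) : ℝ)) * coef (m + 1) (i + 1) := by
    intro i
    simp only [coef, Nat.add_sub_cancel]
    push_cast
    ring
  have hsum : HasDerivAt (Dfam φ h (m + 1))
      (∑ i ∈ Finset.range (m + 1),
        (coef (m + 1) (i + 1) * h ^ (i + 1) *
            (iteratedDerivWithin (i + 1 + 1) φ (Set.Ici 0) (h * Real.sqrt t) * (h * (1 / (2 * Real.sqrt t)))) *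
            t ^ (((i : ℝ) + 1) / 2 - ((m + 1 : ℕ) : ℝ))
          + coef (m + 1) (i + 1) * h ^ (i + 1) * iteratedDerivWithin (i + 1) φ (Set.Ici 0) (h * Real.sqrt t) *
            ((((i : ℝ) + 1) / 2 - ((m + 1 : ℕ) : ℝ)) * t ^ ((((i : ℝ) + 1) / 2 - ((m + 1 : ℕ) : ℝ)) - 1)))) t := by
    show HasDerivAt (fun u : ℝ => ∑ i ∈ Finset.range (m + 1), coef (m + 1) (i + 1) * h ^ (i + 1) *
      iteratedDerivWithin (i + 1) φ (Set.Ici 0) (h * Real.sqrt u) * u ^ (((i : ℝ) + 1) / 2 - ((m + 1 : ℕ) : ℝ))) _ t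
    apply HasDerivAt.fun_sum
    intro i _
    exact ((sqrt_chain hφ hh (i + 1) ht).const_mul (coef (m + 1) (i + 1) * h ^ (i + 1))).mul
      (Real.hasDerivAt_rpow_const (Or.inl ht.ne'))
  have heq : Dfam φ h (m + 2) t = ∑ i ∈ Finset.range (m + 1),
        (coef (m + 1) (i + 1) * h ^ (i + 1) *
            (iteratedDerivWithin (i + 1 + 1) φ (Set.Ici 0) (h * Real.sqrt t) * (h * (1 / (2 * Real.sqrt t)))) *
            t ^ (((i : ℝ) + 1) / 2 - ((m + 1 : ℕ) : ℝ))
          + coef (m + 1) (i + 1) * h ^ (i + 1) * iteratedDerivWithin (i + 1) φ (Set.Ici 0) (h * Real.sqrt t) *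
            ((((i : ℝ) + 1) / 2 - ((m + 1 : ℕ) : ℝ)) * t ^ ((((i : ℝ) + 1) / 2 - ((m + 1 : ℕ) : ℝ)) - 1))) := by
    have hsplit : Dfam φ h (m + 2) t
        = (∑ i ∈ Finset.range (m + 2), 1 / 2 * coef (m + 1) i * h ^ (i + 1) *
            iteratedDerivWithin (i + 1) φ (Set.Ici 0) (h * Real.sqrt t) * t ^ (((i : ℝ) + 1) / 2 - ((m + 2 : ℕ) : ℝ)))
          + ∑ i ∈ Finset.range (m + 2), ((((i : ℝ) + 1) / 2 - ((m + 1 : ℕ) : ℝ)) * coef (m + 1) (i + 1) * h ^ (i + 1) *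
            iteratedDerivWithin (i + 1) φ (Set.Ici 0) (h * Real.sqrt t) * t ^ (((i : ℝ) + 1) / 2 - ((m + 2 : ℕ) : ℝ))) := by
      rw [Dfam, ← Finset.sum_add_distrib]
      apply Finset.sum_congr rfl
      intro i _
      rw [hcoef i]
      ring
    rw [hsplit, Finset.sum_range_succ' _ (m + 1), Finset.sum_range_succ _ (m + 1)]
    rw [coef_zero_right (m + 1), coef_eq_zero (m + 1) (m + 1 + 1) (by omega)]
    simp only [mul_zero, zero_mul, add_zero]
    rw [← Finset.sum_add_distrib]
    apply Finset.sum_congr rfl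
    intro i _
    have hZ := inv_two_sqrt t ht (((i : ℝ) + 1) / 2 - ((m + 1 : ℕ) : ℝ))
    have he1 : ((((i + 1 : ℕ) : ℝ)) + 1) / 2 - ((m + 2 : ℕ) : ℝ)
        = (((i : ℝ) + 1) / 2 - ((m + 1 : ℕ) : ℝ)) - 1 / 2 := by push_cast; ring
    have he2 : (((i : ℕ) : ℝ) + 1) / 2 - ((m + 2 : ℕ) : ℝ)
        = (((i : ℝ) + 1) / 2 - ((m + 1 : ℕ) : ℝ)) - 1 := by push_cast; ring
    rw [he1, he2]
    push_cast at hZ ⊢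
    linear_combination (-(coef (m + 1) (i + 1) * h ^ (i + 2) *
      iteratedDerivWithin (i + 1 + 1) φ (Set.Ici 0) (h * Real.sqrt t))) * hZ
  rw [heq]
  exact hsum

lemma Dfam_bound (hvan : ∀ m : ℕ, 1 ≤ m → iteratedDerivWithin m φ (Set.Ici 0) 0 = 0)
    {B : ℝ} {N : ℕ}
    (hB : ∀ x ∈ Set.Ici (0 : ℝ), |iteratedDerivWithin N φ (Set.Ici 0) x| ≤ B)
    (ℓ : ℕ) (hℓN : ℓ ≤ N) {t : ℝ} (ht : 0 < t) :
    |Dfam φ h ℓ t| ≤ (∑ i ∈ Finset.range ℓ, |coef ℓ (i + 1)|) *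
      (B * h ^ N * t ^ ((N : ℝ) / 2 - (ℓ : ℝ))) := by
  have hst : 0 < h * Real.sqrt t := mul_pos hh (Real.sqrt_pos.2 ht)
  calc |Dfam φ h ℓ t| ≤ ∑ i ∈ Finset.range ℓ, |coef ℓ (i + 1) * h ^ (i + 1) *
        iteratedDerivWithin (i + 1) φ (Set.Ici 0) (h * Real.sqrt t) * t ^ (((i : ℝ) + 1) / 2 - (ℓ : ℝ))| :=
      Finset.abs_sum_le_sum_abs _ _
    _ ≤ ∑ i ∈ Finset.range ℓ, |coef ℓ (i + 1)| * (B * h ^ N * t ^ ((N : ℝ) / 2 - (ℓ : ℝ))) := by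
      apply Finset.sum_le_sum
      intro i hi
      have hiN : i + 1 ≤ N := le_trans (Nat.succ_le_of_lt (Finset.mem_range.1 hi)) hℓN
      have habs : |coef ℓ (i + 1) * h ^ (i + 1) *
          iteratedDerivWithin (i + 1) φ (Set.Ici 0) (h * Real.sqrt t) * t ^ (((i : ℝ) + 1) / 2 - (ℓ : ℝ))|
          = |coef ℓ (i + 1)| * h ^ (i + 1) *
            |iteratedDerivWithin (i + 1) φ (Set.Ici 0) (h * Real.sqrt t)| * t ^ (((i : ℝ) + 1) / 2 - (ℓ : ℝ)) := by
        rw [abs_mul, abs_mul, abs_mul, abs_of_pos (pow_pos hh _),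
          abs_of_pos (Real.rpow_pos_of_pos ht _)]
      rw [habs]
      -- Taylor bound on the (i+1)-st derivative
      have htay : |iteratedDerivWithin (i + 1) φ (Set.Ici 0) (h * Real.sqrt t)|
          ≤ B * (h * Real.sqrt t) ^ (N - (i + 1)) := by
        apply taylor_aux B (N - (i + 1)) (iteratedDerivWithin (i + 1) φ (Set.Ici 0))
          (Phi_smooth hφ (i + 1))
          (fun q hq => by
            rw [Phi_comp q (i + 1) 0 Set.self_mem_Ici]
            exact hvan (i + 1 + q) (by omega))
          (fun x hx => by
            rw [Phi_comp (N - (i + 1)) (i + 1) x hx, show i + 1 + (N - (i + 1)) = N from by omega]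
            exact hB x hx)
          _ hst.le
      have hkey : h ^ (i + 1) * (B * (h * Real.sqrt t) ^ (N - (i + 1))) *
          t ^ (((i : ℝ) + 1) / 2 - (ℓ : ℝ)) = B * h ^ N * t ^ ((N : ℝ) / 2 - (ℓ : ℝ)) := by
        have hsq : Real.sqrt t ^ (N - (i + 1)) = t ^ (((N - (i + 1) : ℕ) : ℝ) / 2) := by
          rw [Real.sqrt_eq_rpow, ← Real.rpow_natCast (t ^ ((1:ℝ) / 2)) (N - (i + 1)),
            ← Real.rpow_mul ht.le]
          congr 1
          ring
        rw [mul_pow, hsq]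
        have h1 : h ^ (i + 1) * (h ^ (N - (i + 1))) = h ^ N := by
          rw [← pow_add]
          congr 1
          omega
        have h2 : t ^ (((N - (i + 1) : ℕ) : ℝ) / 2) * t ^ (((i : ℝ) + 1) / 2 - (ℓ : ℝ))
            = t ^ ((N : ℝ) / 2 - (ℓ : ℝ)) := by
          rw [← Real.rpow_add ht]
          congr 1
          rw [Nat.cast_sub hiN]
          push_cast
          ring
        calc h ^ (i + 1) * (B * (h ^ (N - (i + 1)) * t ^ (((N - (i + 1) : ℕ) : ℝ) / 2))) *
              t ^ (((i : ℝ) + 1) / 2 - (ℓ : ℝ))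
            = B * (h ^ (i + 1) * h ^ (N - (i + 1))) *
              (t ^ (((N - (i + 1) : ℕ) : ℝ) / 2) * t ^ (((i : ℝ) + 1) / 2 - (ℓ : ℝ))) := by ring
          _ = B * h ^ N * t ^ ((N : ℝ) / 2 - (ℓ : ℝ)) := by rw [h1, h2]
      calc |coef ℓ (i + 1)| * h ^ (i + 1) *
            |iteratedDerivWithin (i + 1) φ (Set.Ici 0) (h * Real.sqrt t)| * t ^ (((i : ℝ) + 1) / 2 - (ℓ : ℝ))
          ≤ |coef ℓ (i + 1)| * h ^ (i + 1) * (B * (h * Real.sqrt t) ^ (N - (i + 1))) *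
            t ^ (((i : ℝ) + 1) / 2 - (ℓ : ℝ)) := by
            apply mul_le_mul_of_nonneg_right _ (Real.rpow_pos_of_pos ht _).le
            apply mul_le_mul_of_nonneg_left htay
            positivity
        _ = |coef ℓ (i + 1)| * (h ^ (i + 1) * (B * (h * Real.sqrt t) ^ (N - (i + 1))) *
            t ^ (((i : ℝ) + 1) / 2 - (ℓ : ℝ))) := by ring
        _ = |coef ℓ (i + 1)| * (B * h ^ N * t ^ ((N : ℝ) / 2 - (ℓ : ℝ))) := by rw [hkey]
    _ = (∑ i ∈ Finset.range ℓ, |coef ℓ (i + 1)|) * (B * h ^ N * t ^ ((N : ℝ) / 2 - (ℓ : ℝ))) := by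
      rw [← Finset.sum_mul]

end main
theorem stmt1 (ℓ N : ℕ) (hℓ : 1 ≤ ℓ) (hN : ℓ < N) (n : ℕ) (hn : 1 ≤ n) :
    ∃ C > 0, ∀ φ : ℝ → ℝ, ContDiffOn ℝ (⊤ : ℕ∞) φ (Set.Ici 0) →
      (∀ m : ℕ, 1 ≤ m → iteratedDerivWithin m φ (Set.Ici 0) 0 = 0) →
      ∀ B : ℝ, (∀ x ∈ Set.Ici (0 : ℝ), |iteratedDerivWithin N φ (Set.Ici 0) x| ≤ B) →
      ∀ j k : ℕ,
        |fdiff^[ℓ] (fun k : ℕ => φ ((2 : ℝ) ^ (-(j : ℝ)) * Real.sqrt (2 * k + n))) k| ≤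
          C * B * (2 : ℝ) ^ (-(j : ℝ) * N) * ((2 * k + n : ℝ)) ^ ((N : ℝ) / 2 - ℓ) := by
  obtain ⟨m, rfl⟩ : ∃ m, ℓ = m + 1 := ⟨ℓ - 1, by omega⟩
  set S : ℝ := ∑ i ∈ Finset.range (m + 1), |coef (m + 1) (i + 1)| with hSdef
  have hS0 : 0 ≤ S := Finset.sum_nonneg fun i _ => abs_nonneg _
  set K : ℝ := (1 + 2 * ((m + 1 : ℕ) : ℝ)) ^ ((N : ℝ) / 2) with hKdef
  have hbase : (1 : ℝ) ≤ 1 + 2 * ((m + 1 : ℕ) : ℝ) := by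
    have : (0:ℝ) ≤ ((m + 1 : ℕ) : ℝ) := Nat.cast_nonneg _
    linarith
  have hK1 : 1 ≤ K := Real.one_le_rpow hbase (by positivity)
  have hK0 : 0 < K := lt_of_lt_of_le one_pos hK1
  refine ⟨2 ^ (m + 1) * K * (1 + S), by positivity, ?_⟩
  intro φ hφ' hvan B hB j k
  have hφ : ContDiffOn ℝ (⊤ : ℕ∞) φ (Set.Ici 0) := hφ'.of_le (by simp)
  have hB0 : 0 ≤ B := le_trans (abs_nonneg _) (hB 0 Set.self_mem_Ici)
  set h : ℝ := (2 : ℝ) ^ (-(j : ℝ)) with hhdef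
  have hh : 0 < h := Real.rpow_pos_of_pos two_pos _
  set lam : ℝ := 2 * (k : ℝ) + (n : ℝ) with hlamdef
  have hn1 : (1 : ℝ) ≤ (n : ℝ) := by exact_mod_cast hn
  have hk0 : (0 : ℝ) ≤ (k : ℝ) := Nat.cast_nonneg _
  have hlam1 : 1 ≤ lam := by rw [hlamdef]; linarith
  have hlam0 : 0 < lam := lt_of_lt_of_le one_pos hlam1
  obtain ⟨ξ, hξmem, hval⟩ := fd_mvt (m + 1)
    (fun i => Nat.casesOn i (fun x => φ (h * Real.sqrt x)) (fun m' => Dfam φ h (m' + 1)))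
    (by
      intro i _ x hx
      cases i with
      | zero => exact Dfam_base hφ hh hx
      | succ m' => exact Dfam_step hφ hh m' hx)
    lam hlam0
  have hξ0 : 0 < ξ := lt_of_lt_of_le hlam0 hξmem.1
  have hval' : fdiffR^[m + 1] (fun x => φ (h * Real.sqrt x)) lam
      = 2 ^ (m + 1) * Dfam φ h (m + 1) ξ := hval
  have hLHS : fdiff^[m + 1] (fun k : ℕ => φ (h * Real.sqrt (2 * (k : ℝ) + (n : ℝ)))) k
      = 2 ^ (m + 1) * Dfam φ h (m + 1) ξ := by
    have htrans := fdiff_transfer n (m + 1) (fun x => φ (h * Real.sqrt x)) k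
    exact htrans.trans hval'
  have hhN : h ^ N = (2 : ℝ) ^ (-(j : ℝ) * (N : ℝ)) := by
    rw [hhdef, ← Real.rpow_natCast ((2 : ℝ) ^ (-(j : ℝ))) N,
      ← Real.rpow_mul (by norm_num : (0:ℝ) ≤ 2)]
  set e : ℝ := (N : ℝ) / 2 - ((m + 1 : ℕ) : ℝ) with hedef
  have hξle : ξ ≤ lam * (1 + 2 * ((m + 1 : ℕ) : ℝ)) := by
    have h2 := hξmem.2
    have h3 : (0:ℝ) ≤ ((m + 1 : ℕ) : ℝ) := Nat.cast_nonneg _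
    nlinarith
  have hcomp : ξ ^ e ≤ K * lam ^ e := by
    rcases le_or_gt 0 e with he | he
    · calc ξ ^ e ≤ (lam * (1 + 2 * ((m + 1 : ℕ) : ℝ))) ^ e :=
          Real.rpow_le_rpow hξ0.le hξle he
        _ = lam ^ e * (1 + 2 * ((m + 1 : ℕ) : ℝ)) ^ e :=
          Real.mul_rpow hlam0.le (by linarith)
        _ ≤ lam ^ e * K := by
          apply mul_le_mul_of_nonneg_left _ (Real.rpow_pos_of_pos hlam0 _).le
          rw [hKdef]
          apply Real.rpow_le_rpow_of_exponent_le hbase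
          rw [hedef]
          have : (0:ℝ) ≤ ((m + 1 : ℕ) : ℝ) := Nat.cast_nonneg _
          linarith
        _ = K * lam ^ e := mul_comm _ _
    · calc ξ ^ e ≤ lam ^ e := Real.rpow_le_rpow_of_nonpos hlam0 hξmem.1 he.le
        _ = 1 * lam ^ e := (one_mul _).symm
        _ ≤ K * lam ^ e :=
          mul_le_mul_of_nonneg_right hK1 (Real.rpow_pos_of_pos hlam0 _).le
  calc |fdiff^[m + 1] (fun k : ℕ => φ (h * Real.sqrt (2 * (k : ℝ) + (n : ℝ)))) k|
      = |2 ^ (m + 1) * Dfam φ h (m + 1) ξ| := by rw [hLHS]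
    _ = 2 ^ (m + 1) * |Dfam φ h (m + 1) ξ| := by
        rw [abs_mul, abs_of_pos (pow_pos two_pos _)]
    _ ≤ 2 ^ (m + 1) * (S * (B * h ^ N * ξ ^ e)) := by
        apply mul_le_mul_of_nonneg_left _ (pow_pos (two_pos (α := ℝ)) _).le
        exact Dfam_bound hφ hh hvan hB (m + 1) (le_of_lt hN) hξ0
    _ ≤ 2 ^ (m + 1) * (S * (B * h ^ N * (K * lam ^ e))) := by
        apply mul_le_mul_of_nonneg_left _ (pow_pos (two_pos (α := ℝ)) _).le
        apply mul_le_mul_of_nonneg_left _ hS0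
        exact mul_le_mul_of_nonneg_left hcomp
          (mul_nonneg hB0 (pow_pos hh N).le)
    _ = (2 ^ (m + 1) * K * S) * (B * (2 : ℝ) ^ (-(j : ℝ) * (N : ℝ)) * lam ^ e) := by
        rw [hhN]; ring
    _ ≤ (2 ^ (m + 1) * K * (1 + S)) * (B * (2 : ℝ) ^ (-(j : ℝ) * (N : ℝ)) * lam ^ e) := by
        apply mul_le_mul_of_nonneg_right
        · have h2 : (0:ℝ) < 2 ^ (m + 1) := pow_pos two_pos _
          nlinarith
        · have := Real.rpow_pos_of_pos (show (0:ℝ) < 2 by norm_num) (-(j : ℝ) * (N : ℝ))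
          have := Real.rpow_pos_of_pos hlam0 e
          positivity
    _ = 2 ^ (m + 1) * K * (1 + S) * B * (2 : ℝ) ^ (-(j : ℝ) * (N : ℝ)) * lam ^ e := by ring
end

section
/- Let $\phi$ be a smooth function on $[0,\infty)$, set $\phi_j(x) = \phi(2^{-j}x)$, and let $\ell, N \in \mathbb{N}$ with $N > \ell$, $\lambda_k = 2k+n$. Then there is a constant $C$ depending only on $N$ and $\ell$ such that $|\triangle_k^\ell(\phi_j(\sqrt{\lambda_k}))| \le C \max_{1 \le s \le N} \|\phi^{(s)}\|_{L^\infty} \, \lambda_k^{-\ell/2}$ for all $j, k \in \mathbb{N}_0$. -/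
open Set Finset

/-- Continuous forward difference operator. -/
def Dop (g : ℝ → ℝ) : ℝ → ℝ := fun x => g (x + 1) - g x

lemma fdiff_eq_Dop (m : ℕ) : ∀ (g : ℝ → ℝ) (k : ℕ),
    fdiff^[m] (fun k : ℕ => g (k : ℝ)) k = Dop^[m] g (k : ℝ) := by
  induction m with
  | zero => intro g k; simp
  | succ m ih =>
    intro g k
    rw [Function.iterate_succ_apply, Function.iterate_succ_apply]
    have h1 : fdiff (fun k : ℕ => g (k : ℝ)) = fun k : ℕ => Dop g (k : ℝ) := by
      funext k
      simp only [fdiff, Dop]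
      push_cast
      ring_nf
    rw [h1, ih]

lemma chainD (m : ℕ) : ∀ (gs : ℕ → ℝ → ℝ) (x M : ℝ),
    (∀ i < m, ∀ t, x ≤ t → HasDerivAt (gs i) (gs (i+1) t) t) →
    (∀ t, x ≤ t → t ≤ x + m → |gs m t| ≤ M) →
    |Dop^[m] (gs 0) x| ≤ M := by
  induction m with
  | zero => intro gs x M _ hb; simpa using hb x le_rfl (by simp)
  | succ m ih =>
    intro gs x M hc hb
    rw [Function.iterate_succ_apply]
    have key := ih (fun i => Dop (gs i)) x M ?_ ?_
    · exact key
    · intro i hi t ht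
      have h1 : HasDerivAt (fun y => gs i (y + 1)) (gs (i+1) (t+1)) t := by
        have := (hc i (by omega) (t+1) (by linarith)).comp t
          ((hasDerivAt_id t).add_const 1)
        simpa [Function.comp_def] using this
      exact h1.sub (hc i (by omega) t ht)
    · intro t ht ht'
      have key : ‖gs m (t+1) - gs m t‖ ≤ M * ‖(t+1) - t‖ := by
        apply Convex.norm_image_sub_le_of_norm_hasDerivWithin_le
          (f' := fun y => gs (m+1) y) (s := Set.Icc t (t+1))
          (fun y hy => ((hc m (by omega) y (le_trans ht hy.1)).hasDerivWithinAt))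
          (fun y hy => by
            rw [Real.norm_eq_abs]
            apply hb y (le_trans ht hy.1)
            have := hy.2
            push_cast
            linarith)
          (convex_Icc _ _)
          (Set.left_mem_Icc.2 (by linarith))
          (Set.right_mem_Icc.2 (by linarith))
      simp only [Dop, Real.norm_eq_abs] at key ⊢
      simpa using key

lemma psi_hasDerivAt {φ : ℝ → ℝ} (hφ : ContDiffOn ℝ (⊤ : ℕ∞) φ (Set.Ici 0)) (s : ℕ)
    {u : ℝ} (hu : 0 < u) :
    HasDerivAt (iteratedDerivWithin s φ (Set.Ici 0))
      (iteratedDerivWithin (s+1) φ (Set.Ici 0) u) u := by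
  have hU : UniqueDiffOn ℝ (Set.Ici (0:ℝ)) := uniqueDiffOn_Ici 0
  have hnh : Set.Ici (0:ℝ) ∈ nhds u := Ici_mem_nhds hu
  have hdiff : DifferentiableOn ℝ (iteratedDerivWithin s φ (Set.Ici 0)) (Set.Ici 0) :=
    hφ.differentiableOn_iteratedDerivWithin (by exact_mod_cast ENat.coe_lt_top s) hU
  have hd : DifferentiableAt ℝ (iteratedDerivWithin s φ (Set.Ici 0)) u :=
    (hdiff u hu.le).differentiableAt hnh
  have h2 := hd.hasDerivAt
  rwa [← derivWithin_of_mem_nhds hnh,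
    ← iteratedDerivWithin_succ] at h2

/-- The explicit form of iterated derivatives of `t ↦ φ (h √(2t+n))`. -/
noncomputable def Fsum (φ : ℝ → ℝ) (n : ℕ) (h : ℝ) (a : ℕ → ℝ) (m : ℕ) (t : ℝ) : ℝ :=
  ∑ s ∈ Finset.range (m+1),
    a s * h ^ s * ((2*t+n) ^ ((s:ℝ)/2 - m) *
      iteratedDerivWithin s φ (Set.Ici 0) (h * Real.sqrt (2*t+n)))

/-- Coefficient recursion. -/
def stepA (m : ℕ) (a : ℕ → ℝ) : ℕ → ℝ :=
  fun s => ((s:ℝ) - 2*m) * a s + (if s = 0 then 0 else a (s-1))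

def Acoef : ℕ → ℕ → ℝ
  | 0 => fun s => if s = 0 then 1 else 0
  | (m+1) => stepA m (Acoef m)

lemma Acoef_eq_zero : ∀ m s, m < s → Acoef m s = 0 := by
  intro m
  induction m with
  | zero => intro s hs; simp [Acoef]; omega
  | succ m ih =>
    intro s hs
    have h1 : Acoef m s = 0 := ih s (by omega)
    have h2 : Acoef m (s-1) = 0 := ih (s-1) (by omega)
    simp [Acoef, stepA, h1, h2]

lemma Acoef_zero : ∀ m, Acoef (m+1) 0 = 0 := by
  intro m
  induction m with
  | zero => norm_num [Acoef, stepA]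
  | succ m ih =>
    show stepA (m+1) (Acoef (m+1)) 0 = 0
    simp [stepA, ih]

lemma Fsum_hasDerivAt {φ : ℝ → ℝ} (hφ : ContDiffOn ℝ (⊤ : ℕ∞) φ (Set.Ici 0))
    (n : ℕ) (hn : 1 ≤ n) {h : ℝ} (hh : 0 < h) (m : ℕ) (a : ℕ → ℝ)
    (ha : a (m+1) = 0) {t : ℝ} (ht : -(1/2 : ℝ) < t) :
    HasDerivAt (Fsum φ n h a m) (Fsum φ n h (stepA m a) (m+1) t) t := by
  have hn' : (1:ℝ) ≤ n := by exact_mod_cast hn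
  have hP : (0:ℝ) < 2*t+n := by linarith
  have hsq : (0:ℝ) < Real.sqrt (2*t+n) := Real.sqrt_pos.2 hP
  have hu : (0:ℝ) < h * Real.sqrt (2*t+n) := mul_pos hh hsq
  set ψ : ℕ → ℝ → ℝ := fun s => iteratedDerivWithin s φ (Set.Ici 0) with hψdef
  set u : ℝ := h * Real.sqrt (2*t+n) with hudef
  have hp : ∀ y : ℝ, HasDerivAt (fun y : ℝ => 2*y + (n:ℝ)) 2 y := by
    intro y
    simpa using ((hasDerivAt_id y).const_mul (2:ℝ)).add_const (n:ℝ)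
  -- derivative of each summand
  have key : ∀ s : ℕ, HasDerivAt
      (fun y => a s * h ^ s * ((2*y+n) ^ ((s:ℝ)/2 - m) *
        ψ s (h * Real.sqrt (2*y+n))))
      (((s:ℝ) - 2*m) * a s * h ^ s * ((2*t+n) ^ ((s:ℝ)/2 - ((m:ℝ)+1)) * ψ s u)
        + a s * h ^ (s+1) * ((2*t+n) ^ (((s:ℝ)+1)/2 - ((m:ℝ)+1)) * ψ (s+1) u)) t := by
    intro s
    set α : ℝ := (s:ℝ)/2 - m with hα
    have hrpow : HasDerivAt (fun y : ℝ => (2*y+n) ^ α) (α * (2*t+n) ^ (α-1) * 2) t := by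
      have := (Real.hasDerivAt_rpow_const (x := 2*t+n) (p := α) (Or.inl hP.ne')).comp t (hp t)
      simpa [Function.comp_def] using this
    have hsqrt : HasDerivAt (fun y : ℝ => h * Real.sqrt (2*y+n))
        (h * (1 / (2 * Real.sqrt (2*t+n)) * 2)) t := by
      have := ((Real.hasDerivAt_sqrt hP.ne').comp t (hp t)).const_mul h
      simpa [Function.comp, mul_comm] using this
    have hpsi : HasDerivAt (ψ s) (ψ (s+1) u) u := psi_hasDerivAt hφ s hu
    have hcomp : HasDerivAt (fun y => ψ s (h * Real.sqrt (2*y+n)))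
        (ψ (s+1) u * (h * (1 / (2 * Real.sqrt (2*t+n)) * 2))) t := by
      have := hpsi.comp t hsqrt
      simpa [Function.comp_def, hudef] using this
    have hmul := (hrpow.mul hcomp).const_mul (a s * h ^ s)
    refine hmul.congr_deriv (Eq.symm ?_)
    · -- value identity
      have e1 : (s:ℝ)/2 - ((m:ℝ)+1) = α - 1 := by rw [hα]; ring
      have e2 : ((s:ℝ)+1)/2 - ((m:ℝ)+1) = α + (-(1/2 : ℝ)) := by rw [hα]; ring
      rw [e1, e2, Real.rpow_add hP, Real.rpow_neg hP.le, ← Real.sqrt_eq_rpow]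
      have hs0 : Real.sqrt (2*t+n) ≠ 0 := hsq.ne'
      rw [← hudef]
      field_simp
      rw [hα]
      ring
  have hsum : HasDerivAt (fun y => ∑ s ∈ Finset.range (m+1),
      a s * h ^ s * ((2*y+n) ^ ((s:ℝ)/2 - m) * ψ s (h * Real.sqrt (2*y+n))))
      (∑ s ∈ Finset.range (m+1),
        (((s:ℝ) - 2*m) * a s * h ^ s * ((2*t+n) ^ ((s:ℝ)/2 - ((m:ℝ)+1)) * ψ s u)
        + a s * h ^ (s+1) * ((2*t+n) ^ (((s:ℝ)+1)/2 - ((m:ℝ)+1)) * ψ (s+1) u))) t :=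
    HasDerivAt.fun_sum (fun s _ => key s)
  refine hsum.congr_deriv (Eq.symm ?_)
  -- sum identity
  rw [Finset.sum_add_distrib]
  have hT : ∀ s : ℕ, s ∈ Finset.range (m+2) → (stepA m a s * h ^ s *
      ((2*t+n) ^ ((s:ℝ)/2 - ((m+1:ℕ):ℝ)) * ψ s u))
      = ((s:ℝ) - 2*m) * a s * h ^ s * ((2*t+n) ^ ((s:ℝ)/2 - ((m:ℝ)+1)) * ψ s u)
        + (if s = 0 then 0 else a (s-1)) * h ^ s *
          ((2*t+n) ^ ((s:ℝ)/2 - ((m:ℝ)+1)) * ψ s u) := by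
    intro s _
    push_cast
    simp only [stepA]
    ring
  rw [show Fsum φ n h (stepA m a) (m+1) t = ∑ s ∈ Finset.range (m+2), stepA m a s * h ^ s *
      ((2*t+n) ^ ((s:ℝ)/2 - ((m+1:ℕ):ℝ)) * ψ s u) from rfl]
  rw [Finset.sum_congr rfl hT, Finset.sum_add_distrib]
  congr 1
  · -- first sums
    rw [Finset.sum_range_succ, ha]
    simp
  · -- second sums: shift index
    rw [Finset.sum_range_succ']
    simp only [Nat.add_sub_cancel, if_neg (Nat.succ_ne_zero _)]
    push_cast
    simp

lemma Fsum_bound (φ : ℝ → ℝ) (n : ℕ) (hn : 1 ≤ n) {h : ℝ} (hh : 0 < h) (hh1 : h ≤ 1)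
    (a : ℕ → ℝ) (m : ℕ) (ha0 : a 0 = 0) (B : ℝ) (hB0 : 0 ≤ B)
    (hψ : ∀ s, 1 ≤ s → s ≤ m → ∀ u, 0 ≤ u → |iteratedDerivWithin s φ (Set.Ici 0) u| ≤ B)
    {x t : ℝ} (hx : 0 ≤ x) (hxt : x ≤ t) :
    |Fsum φ n h a m t| ≤
      (∑ s ∈ Finset.range (m+1), |a s|) * (B * (2*x+n) ^ (-(m:ℝ)/2)) := by
  have hn' : (1:ℝ) ≤ n := by exact_mod_cast hn
  have hQ1 : (1:ℝ) ≤ 2*x+n := by linarith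
  have hP1 : (1:ℝ) ≤ 2*t+n := by linarith
  have hQP : 2*x+n ≤ 2*t+n := by linarith
  have key : ∀ s ∈ Finset.range (m+1),
      |a s * h ^ s * ((2*t+n) ^ ((s:ℝ)/2 - m) *
        iteratedDerivWithin s φ (Set.Ici 0) (h * Real.sqrt (2*t+n)))|
      ≤ |a s| * (B * (2*x+n) ^ (-(m:ℝ)/2)) := by
    intro s hs
    rcases Nat.eq_zero_or_pos s with rfl | hs1
    · simp [ha0]
    · have hsm : s ≤ m := by simpa using Nat.lt_succ_iff.1 (Finset.mem_range.1 hs)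
      rw [abs_mul, abs_mul, abs_mul]
      have h1 : |h ^ s| = h ^ s := abs_of_pos (pow_pos hh s)
      have h2 : |(2*t+n) ^ ((s:ℝ)/2 - m)| = (2*t+n) ^ ((s:ℝ)/2 - m) :=
        abs_of_pos (Real.rpow_pos_of_pos (by linarith) _)
      rw [h1, h2]
      have hpow : h ^ s ≤ 1 := pow_le_one₀ hh.le hh1
      have hrp : (2*t+n) ^ ((s:ℝ)/2 - m) ≤ (2*x+n) ^ (-(m:ℝ)/2) := by
        calc (2*t+n) ^ ((s:ℝ)/2 - m) ≤ (2*t+n) ^ (-(m:ℝ)/2) := by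
              apply Real.rpow_le_rpow_of_exponent_le hP1
              have : (s:ℝ) ≤ m := by exact_mod_cast hsm
              linarith
          _ ≤ (2*x+n) ^ (-(m:ℝ)/2) := by
              apply Real.rpow_le_rpow_of_nonpos (by linarith) hQP
              have : (0:ℝ) ≤ (m:ℝ) := Nat.cast_nonneg m
              linarith
      have hψb : |iteratedDerivWithin s φ (Set.Ici 0) (h * Real.sqrt (2*t+n))| ≤ B :=
        hψ s hs1 hsm _ (by positivity)
      calc |a s| * h ^ s * ((2*t+n) ^ ((s:ℝ)/2 - m) *
            |iteratedDerivWithin s φ (Set.Ici 0) (h * Real.sqrt (2*t+n))|)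
          ≤ |a s| * 1 * ((2*x+n) ^ (-(m:ℝ)/2) * B) := by
            gcongr
        _ = |a s| * (B * (2*x+n) ^ (-(m:ℝ)/2)) := by ring
  calc |Fsum φ n h a m t| ≤ ∑ s ∈ Finset.range (m+1),
        |a s * h ^ s * ((2*t+n) ^ ((s:ℝ)/2 - m) *
          iteratedDerivWithin s φ (Set.Ici 0) (h * Real.sqrt (2*t+n)))| :=
        Finset.abs_sum_le_sum_abs _ _
    _ ≤ ∑ s ∈ Finset.range (m+1), |a s| * (B * (2*x+n) ^ (-(m:ℝ)/2)) :=
        Finset.sum_le_sum key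
    _ = (∑ s ∈ Finset.range (m+1), |a s|) * (B * (2*x+n) ^ (-(m:ℝ)/2)) := by
        rw [Finset.sum_mul]

theorem stmt2 (ℓ N : ℕ) (hℓ : 1 ≤ ℓ) (hN : ℓ < N) (n : ℕ) (hn : 1 ≤ n) :
    ∃ C > 0, ∀ φ : ℝ → ℝ, ContDiffOn ℝ (⊤ : ℕ∞) φ (Set.Ici 0) →
      ∀ B : ℝ,
      (∀ s : ℕ, 1 ≤ s → s ≤ N →
        ∀ x ∈ Set.Ici (0 : ℝ), |iteratedDerivWithin s φ (Set.Ici 0) x| ≤ B) →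
      ∀ j k : ℕ,
        |fdiff^[ℓ] (fun k : ℕ => φ ((2 : ℝ) ^ (-(j : ℝ)) * Real.sqrt (2 * k + n))) k| ≤
          C * B * ((2 * k + n : ℝ)) ^ (-(ℓ : ℝ) / 2) := by
  refine ⟨(∑ s ∈ Finset.range (ℓ+1), |Acoef ℓ s|) + 1, by positivity, ?_⟩
  intro φ hφ B hB j k
  set h : ℝ := (2 : ℝ) ^ (-(j : ℝ)) with hhdef
  have hh : 0 < h := Real.rpow_pos_of_pos two_pos _
  have hh1 : h ≤ 1 :=
    Real.rpow_le_one_of_one_le_of_nonpos one_le_two (neg_nonpos.2 (Nat.cast_nonneg j))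
  have hB0 : 0 ≤ B := (abs_nonneg _).trans (hB 1 le_rfl (by omega) 0 Set.self_mem_Ici)
  have hA0 : Acoef ℓ 0 = 0 := by
    cases ℓ with
    | zero => omega
    | succ m => exact Acoef_zero m
  -- rewrite the sequence as values of Fsum (Acoef 0) 0
  have hg0 : ∀ t : ℝ, Fsum φ n h (Acoef 0) 0 t = φ (h * Real.sqrt (2*t+n)) := by
    intro t
    norm_num [Fsum, Acoef]
  have hseq : (fun k : ℕ => φ ((2 : ℝ) ^ (-(j : ℝ)) * Real.sqrt (2 * k + n)))
      = (fun k : ℕ => Fsum φ n h (Acoef 0) 0 (k : ℝ)) := by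
    funext k
    rw [hg0]
  rw [hseq, fdiff_eq_Dop ℓ]
  have hmain : |Dop^[ℓ] (Fsum φ n h (Acoef 0) 0) (k:ℝ)| ≤
      (∑ s ∈ Finset.range (ℓ+1), |Acoef ℓ s|) * (B * (2*(k:ℝ)+n) ^ (-(ℓ:ℝ)/2)) := by
    apply chainD ℓ (fun i => Fsum φ n h (Acoef i) i) (k:ℝ) _
    · intro i hi t ht
      have ht' : -(1/2 : ℝ) < t := by
        have : (0:ℝ) ≤ (k:ℝ) := Nat.cast_nonneg k
        linarith
      exact Fsum_hasDerivAt hφ n hn hh i (Acoef i)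
        (Acoef_eq_zero i (i+1) (lt_add_one i)) ht'
    · intro t ht ht'
      apply Fsum_bound φ n hn hh hh1 (Acoef ℓ) ℓ hA0 B hB0 ?_ (Nat.cast_nonneg k) ht
      intro s hs1 hs2 u hu
      exact hB s hs1 (by omega) u hu
  refine hmain.trans ?_
  have h1 : (0:ℝ) ≤ ∑ s ∈ Finset.range (ℓ+1), |Acoef ℓ s| :=
    Finset.sum_nonneg (fun s _ => abs_nonneg _)
  have h2 : (0:ℝ) ≤ (2*(k:ℝ)+n) ^ (-(ℓ:ℝ)/2) := by positivity
  nlinarith [mul_nonneg hB0 h2]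
end
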